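/- Davidson model with κ = 2: with F_L(z) = 1/(1 + 10^{−z}) and G_D(z) = (10^{z} + 1) / (10^{−z} + 2 + 10^{z}) (i.e., the Davidson expected-score function with κ = 2), one has G_D(z) = F_L(z) for every z ∈ ℝ. Consequently, the derivative in z of the Davidson log-likelihood with κ = 2 at outcome y ∈ {0, 1, 2} equals 2 (ln 10)(y/2 − F_L(z)), which for y ∈ {0, 2} is exactly twice the Bradley–Terry gradient (ln 10)(y/2 − F_L(z)) at the binary outcome y/2. -/

import Mathlib

/-- Base-10 logistic function `F_L(z) = 1/(1 + 10^{−z})`. -/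
noncomputable def FL (z : ℝ) : ℝ := 1 / (1 + (10 : ℝ) ^ (-z))

/-- Davidson model function `F_D(z) = 10^z / (10^{−z} + κ + 10^z)`. -/
noncomputable def FD (κ z : ℝ) : ℝ :=
  (10 : ℝ) ^ z / ((10 : ℝ) ^ (-z) + κ + (10 : ℝ) ^ z)

/-- Davidson expected-score function `G_D(z) = (10^z + κ/2) / (10^{−z} + κ + 10^z)`. -/
noncomputable def GD (κ z : ℝ) : ℝ :=
  ((10 : ℝ) ^ z + κ / 2) / ((10 : ℝ) ^ (-z) + κ + (10 : ℝ) ^ z)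

/-- Davidson outcome probability: `L(z; 0) = F_D(−z)` (away win),
`L(z; 1) = κ √(F_D(z) F_D(−z))` (draw), `L(z; 2) = F_D(z)` (home win). -/
noncomputable def LD (κ z y : ℝ) : ℝ :=
  if y = 0 then FD κ (-z)
  else if y = 1 then κ * Real.sqrt (FD κ z * FD κ (-z))
  else FD κ z

lemma ten_rpow_pos (w : ℝ) : (0:ℝ) < (10:ℝ) ^ w :=
  Real.rpow_pos_of_pos (by norm_num) w

lemma one_add_ten_rpow_pos (w : ℝ) : (0:ℝ) < 1 + (10:ℝ) ^ w := by
  have := ten_rpow_pos w; linarith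

lemma FL_eq (z : ℝ) : FL z = (10:ℝ) ^ z / (1 + (10:ℝ) ^ z) := by
  have h := ten_rpow_pos z
  have h1 := one_add_ten_rpow_pos z
  unfold FL
  rw [Real.rpow_neg (by norm_num), div_eq_div_iff (by positivity) (by positivity)]
  field_simp
  ring

lemma FD_two (w : ℝ) : FD 2 w = ((10:ℝ) ^ w) ^ 2 / (1 + (10:ℝ) ^ w) ^ 2 := by
  have h := ten_rpow_pos w
  have h1 := one_add_ten_rpow_pos w
  unfold FD
  rw [Real.rpow_neg (by norm_num)]
  rw [div_eq_div_iff (by positivity) (by positivity)]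
  field_simp
  ring

lemma FD_two_neg (w : ℝ) : FD 2 (-w) = 1 / (1 + (10:ℝ) ^ w) ^ 2 := by
  have h := ten_rpow_pos w
  have h1 := one_add_ten_rpow_pos w
  unfold FD
  rw [neg_neg, Real.rpow_neg (by norm_num)]
  rw [div_eq_div_iff (by positivity) (by positivity)]
  field_simp
  ring

lemma LD_zero (w : ℝ) : LD 2 w 0 = FD 2 (-w) := by simp [LD]

lemma LD_one (w : ℝ) : LD 2 w 1 = 2 * Real.sqrt (FD 2 w * FD 2 (-w)) := by
  simp [LD]

lemma LD_two (w : ℝ) : LD 2 w 2 = FD 2 w := by norm_num [LD]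

lemma hasDerivAt_ten_rpow (z : ℝ) :
    HasDerivAt (fun x : ℝ => (10:ℝ) ^ x) ((10:ℝ) ^ z * Real.log 10) z :=
  (Real.hasStrictDerivAt_const_rpow (by norm_num) z).hasDerivAt

lemma hasDerivAt_log_one_add (z : ℝ) :
    HasDerivAt (fun x : ℝ => Real.log (1 + (10:ℝ) ^ x))
      ((10:ℝ) ^ z * Real.log 10 / (1 + (10:ℝ) ^ z)) z := by
  have := ((hasDerivAt_const z (1:ℝ)).add (hasDerivAt_ten_rpow z)).log
    (ne_of_gt (one_add_ten_rpow_pos z))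
  simpa using this

/-- Davidson model with `κ = 2`: the expected-score function `G_D` coincides with the
logistic function `F_L`; consequently the derivative in `z` of the Davidson
log-likelihood with `κ = 2` at outcome `y ∈ {0, 1, 2}` equals
`2 (ln 10)(y/2 − F_L(z))`, which is exactly twice the Bradley–Terry gradient
`(ln 10)(y/2 − F_L(z))` at the binary outcome `y/2`. -/
theorem davidson_kappa_two_is_bradleyTerry :
    (∀ z : ℝ, GD 2 z = FL z) ∧
      (∀ y : ℝ, (y = 0 ∨ y = 1 ∨ y = 2) → ∀ z : ℝ,
        HasDerivAt (fun w => Real.log (LD 2 w y))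
          (2 * (Real.log 10 * (y / 2 - FL z))) z) := by
  constructor
  · intro z
    have h := ten_rpow_pos z
    have h1 := one_add_ten_rpow_pos z
    unfold GD
    rw [FL_eq, Real.rpow_neg (by norm_num)]
    rw [div_eq_div_iff (by positivity) (by positivity)]
    field_simp
    ring
  · rintro y (rfl | rfl | rfl) z
    · -- y = 0
      have key : (fun w => Real.log (LD 2 w 0))
          = fun w => -(2 * Real.log (1 + (10:ℝ) ^ w)) := by
        funext w
        have h1 := one_add_ten_rpow_pos w
        rw [LD_zero, FD_two_neg,
          Real.log_div one_ne_zero (by positivity), Real.log_one, Real.log_pow]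
        push_cast; ring
      rw [key]
      have hd : HasDerivAt (fun w => -(2 * Real.log (1 + (10:ℝ) ^ w)))
          (-(2 * ((10:ℝ) ^ z * Real.log 10 / (1 + (10:ℝ) ^ z)))) z :=
        ((hasDerivAt_log_one_add z).const_mul (2:ℝ)).neg
      convert hd using 1
      rw [FL_eq]
      have h1 := one_add_ten_rpow_pos z
      field_simp
      ring
    · -- y = 1
      have key : (fun w => Real.log (LD 2 w 1))
          = fun w => Real.log 2 + w * Real.log 10
              - 2 * Real.log (1 + (10:ℝ) ^ w) := by
        funext w
        have h := ten_rpow_pos w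
        have h1 := one_add_ten_rpow_pos w
        have hprod : FD 2 w * FD 2 (-w)
            = ((10:ℝ) ^ w / (1 + (10:ℝ) ^ w) ^ 2) ^ 2 := by
          rw [FD_two w, FD_two_neg w]; ring
        rw [LD_one, hprod, Real.sqrt_sq (by positivity),
          Real.log_mul (by norm_num) (by positivity),
          Real.log_div (by positivity) (by positivity), Real.log_pow,
          Real.log_rpow (by norm_num)]
        push_cast; ring
      rw [key]
      have hd : HasDerivAt
          (fun w : ℝ => Real.log 2 + w * Real.log 10
            - 2 * Real.log (1 + (10:ℝ) ^ w))
          (Real.log 10 - 2 * ((10:ℝ) ^ z * Real.log 10 / (1 + (10:ℝ) ^ z)))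
          z := by
        have h1 : HasDerivAt (fun w : ℝ => Real.log 2 + w * Real.log 10)
            (Real.log 10) z := by
          exact ((hasDerivAt_const z (Real.log 2)).add
            ((hasDerivAt_id z).mul_const (Real.log 10))).congr_deriv (by simp)
        exact h1.sub ((hasDerivAt_log_one_add z).const_mul (2:ℝ))
      convert hd using 1
      rw [FL_eq]
      have h1 := one_add_ten_rpow_pos z
      field_simp
    · -- y = 2
      have key : (fun w => Real.log (LD 2 w 2))
          = fun w => 2 * (w * Real.log 10)
              - 2 * Real.log (1 + (10:ℝ) ^ w) := by
        funext w
        have h := ten_rpow_pos w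
        have h1 := one_add_ten_rpow_pos w
        rw [LD_two, FD_two,
          Real.log_div (by positivity) (by positivity), Real.log_pow,
          Real.log_pow, Real.log_rpow (by norm_num)]
        push_cast; ring
      rw [key]
      have hd : HasDerivAt
          (fun w : ℝ => 2 * (w * Real.log 10)
            - 2 * Real.log (1 + (10:ℝ) ^ w))
          (2 * Real.log 10 - 2 * ((10:ℝ) ^ z * Real.log 10 / (1 + (10:ℝ) ^ z)))
          z := by
        have h1 : HasDerivAt (fun w : ℝ => 2 * (w * Real.log 10))
            (2 * Real.log 10) z := by
          simpa using ((hasDerivAt_id z).mul_const (Real.log 10)).const_mul (2:ℝ)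
        exact h1.sub ((hasDerivAt_log_one_add z).const_mul (2:ℝ))
      convert hd using 1
      rw [FL_eq]
      have h1 := one_add_ten_rpow_pos z
      field_simp
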